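/- Let W be a convex subset of a real normed vector space, let (Ω, F, P) be a probability space, let X and Y be random variables on Ω taking values in W, and let A be a Borel subset of W. Then |P[X ∈ A] − P[Y ∈ A]| ≤ P[ dist(X, ∂A) + dist(Y, ∂A) ≤ ‖X − Y‖ ]. -/

import Mathlib

open MeasureTheory Metric Set
open scoped symmDiff

theorem MeasureTheory.abs_measureReal_sub_le_of_symmDiff_subset {α : Type*} [MeasurableSpace α]
    {μ : Measure α} [IsFiniteMeasure μ] {s t u : Set α} (h : s ∆ t ⊆ u) :
    |μ.real s - μ.real t| ≤ μ.real u := by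
  rw [Set.symmDiff_def, union_subset_iff] at h
  exact abs_sub_le_iff.2
    ⟨(le_measureReal_sdiff (by finiteness)).trans (measureReal_mono h.1),
      (le_measureReal_sdiff (by finiteness)).trans (measureReal_mono h.2)⟩

theorem IsPreconnected.inter_closure_inter_closure_sdiff_nonempty {X : Type*}
    [TopologicalSpace X] {S W A : Set X} (hS : IsPreconnected S) (hSW : S ⊆ W)
    {x y : X} (hxS : x ∈ S) (hyS : y ∈ S) (hxA : x ∈ A) (hyA : y ∉ A) :
    (S ∩ (closure A ∩ closure (W \ A))).Nonempty := by
  have hcover : S ⊆ closure A ∪ closure (W \ A) := fun z hz ↦ by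
    by_cases hzA : z ∈ A
    · exact Or.inl (subset_closure hzA)
    · exact Or.inr (subset_closure ⟨hSW hz, hzA⟩)
  exact isPreconnected_closed_iff.mp hS _ _ isClosed_closure isClosed_closure hcover
    ⟨x, hxS, subset_closure hxA⟩ ⟨y, hyS, subset_closure ⟨hSW hyS, hyA⟩⟩

theorem infDist_add_infDist_le_dist_of_mem_segment {V : Type*} [NormedAddCommGroup V]
    [NormedSpace ℝ V] {s : Set V} {x y z : V} (hz : z ∈ segment ℝ x y) (hzs : z ∈ s) :
    infDist x s + infDist y s ≤ dist x y :=
  calc infDist x s + infDist y s ≤ dist x z + dist z y := by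
        rw [dist_comm z y]
        exact add_le_add (infDist_le_dist_of_mem hzs) (infDist_le_dist_of_mem hzs)
    _ = dist x y := dist_add_dist_of_mem_segment hz

/-- Any segment from a point of `A` to a point of `W \ A` crosses the relative boundary of `A`. -/
theorem Convex.infDist_add_infDist_le_dist {V : Type*} [NormedAddCommGroup V]
    [NormedSpace ℝ V] {W A : Set V} (hW : Convex ℝ W) {x y : V} (hx : x ∈ W) (hy : y ∈ W)
    (hxA : x ∈ A) (hyA : y ∉ A) :
    infDist x (W ∩ closure A ∩ closure (W \ A)) + infDist y (W ∩ closure A ∩ closure (W \ A))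
      ≤ dist x y := by
  have hseg : segment ℝ x y ⊆ W := hW.segment_subset hx hy
  obtain ⟨z, hz, hzA, hzB⟩ := (convex_segment x y).isPreconnected
    |>.inter_closure_inter_closure_sdiff_nonempty hseg (left_mem_segment ℝ x y)
      (right_mem_segment ℝ x y) hxA hyA
  exact infDist_add_infDist_le_dist_of_mem_segment hz ⟨⟨hseg hz, hzA⟩, hzB⟩

/- The relative boundary of `A` in the subspace topology of `W` is
`W ∩ closure A ∩ closure (W \ A)`; `dist(w, ∂A)` is `Metric.infDist`. -/
theorem stmt_18_general {V : Type*} [NormedAddCommGroup V] [NormedSpace ℝ V]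
    {W : Set V} (hW : Convex ℝ W)
    {Ω : Type*} [MeasurableSpace Ω] (P : Measure Ω) [IsProbabilityMeasure P]
    (X Y : Ω → V)
    (hXW : ∀ ω, X ω ∈ W) (hYW : ∀ ω, Y ω ∈ W)
    (A : Set V) :
    |(P {ω | X ω ∈ A}).toReal - (P {ω | Y ω ∈ A}).toReal| ≤
      (P {ω | Metric.infDist (X ω) (W ∩ closure A ∩ closure (W \ A)) +
              Metric.infDist (Y ω) (W ∩ closure A ∩ closure (W \ A)) ≤
              ‖X ω - Y ω‖}).toReal := by
  simp only [← measureReal_def, ← dist_eq_norm]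
  refine abs_measureReal_sub_le_of_symmDiff_subset ?_
  rintro ω (⟨hXA, hYA⟩ | ⟨hYA, hXA⟩)
  · exact hW.infDist_add_infDist_le_dist (hXW ω) (hYW ω) hXA hYA
  · rw [mem_ofPred_eq, add_comm, dist_comm]
    exact hW.infDist_add_infDist_le_dist (hYW ω) (hXW ω) hYA hXA

theorem stmt_18 {V : Type*} [NormedAddCommGroup V] [NormedSpace ℝ V]
    [MeasurableSpace V] [BorelSpace V]
    {W : Set V} (hW : Convex ℝ W)
    {Ω : Type*} [MeasurableSpace Ω] (P : Measure Ω) [IsProbabilityMeasure P]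
    (X Y : Ω → V) (hX : Measurable X) (hY : Measurable Y)
    (hXW : ∀ ω, X ω ∈ W) (hYW : ∀ ω, Y ω ∈ W)
    (A : Set V) (hAW : A ⊆ W) (hA : MeasurableSet A) :
    |(P {ω | X ω ∈ A}).toReal - (P {ω | Y ω ∈ A}).toReal| ≤
      (P {ω | Metric.infDist (X ω) (W ∩ closure A ∩ closure (W \ A)) +
              Metric.infDist (Y ω) (W ∩ closure A ∩ closure (W \ A)) ≤
              ‖X ω - Y ω‖}).toReal :=
  stmt_18_general hW P X Y hXW hYW A
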